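/- The modulus of the theta function is invariant under the element ρ₂ = (n₁; (s, 0)) with s = (½,…,½): for every measurable f : ℝ^k → ℂ with κ_η(f) < ∞ for some η > k, every z ∈ ℍ, φ ∈ ℝ, and ξ₁, ξ₂ ∈ ℝ^k, one has |Θ_f(z + 1, φ; (ξ₁ + ξ₂ + s, ξ₂))| = |Θ_f(z, φ; (ξ₁, ξ₂))|, where s ∈ ℝ^k is the vector all of whose entries equal ½. -/

import Mathlib

open scoped RealInnerProductSpace
open MeasureTheory
open scoped ENNReal Classical

/-- ℝ^k as a Euclidean space. -/
abbrev E (k : ℕ) := EuclideanSpace ℝ (Fin k)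

/-- `e(t) = exp(2πit)`. -/
noncomputable def e (t : ℝ) : ℂ := Complex.exp (2 * Real.pi * Complex.I * t)

/-- `f_φ := R(k_φ)f`: equal to `f` when `φ ≡ 0 (mod 2π)`, to `w ↦ f(−w)` when
`φ ≡ π (mod 2π)`, and given by the oscillatory integral otherwise. -/
noncomputable def fphi {k : ℕ} (f : E k → ℂ) (φ : ℝ) : E k → ℂ :=
  fun w =>
    if ∃ m : ℤ, φ = 2 * Real.pi * m then f w
    else if ∃ m : ℤ, φ = Real.pi + 2 * Real.pi * m then f (-w)
    else ((|Real.sin φ| ^ (-(k : ℝ) / 2) : ℝ) : ℂ) *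
      ∫ v : E k,
        e (((1 / 2) * (‖w‖ ^ 2 + ‖v‖ ^ 2) * Real.cos φ - ⟪w, v⟫) / Real.sin φ) * f v

/-- `κ_η(f) = sup_{w,φ} (1+‖w‖²)^{η/2} |f_φ(w)|` (valued in `ℝ≥0∞`). -/
noncomputable def kappa {k : ℕ} (η : ℝ) (f : E k → ℂ) : ℝ≥0∞ :=
  ⨆ (w : E k) (φ : ℝ),
    ENNReal.ofReal ((1 + ‖w‖ ^ 2) ^ (η / 2) * ‖fphi f φ w‖)

/-- The lattice point `n ∈ ℤ^k` viewed as a vector in ℝ^k. -/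
noncomputable def intVec {k : ℕ} (n : Fin k → ℤ) : E k :=
  (EuclideanSpace.equiv (Fin k) ℝ).symm (fun i => (n i : ℝ))

/-- The Jacobi theta function
`Θ_f(z, φ; ξ) = y^{k/4} Σ_{n ∈ ℤ^k} f_φ((n − ξ₂)√y) e(½‖n − ξ₂‖² x + n·ξ₁)`,
where `z = x + iy`. -/
noncomputable def Theta {k : ℕ} (f : E k → ℂ) (z : ℂ) (φ : ℝ) (ξ : E k × E k) : ℂ :=
  ((z.im ^ ((k : ℝ) / 4) : ℝ) : ℂ) *
    ∑' n : Fin k → ℤ,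
      fphi f φ (Real.sqrt z.im • (intVec n - ξ.2)) *
        e ((1 / 2) * ‖intVec n - ξ.2‖ ^ 2 * z.re + ⟪intVec n, ξ.1⟫)

/-- The vector `s = (½,…,½) ∈ ℝ^k`. -/
noncomputable def halfVec (k : ℕ) : E k :=
  (EuclideanSpace.equiv (Fin k) ℝ).symm (fun _ => (1 / 2 : ℝ))

/-!
Replacing `x` by `x + 1` multiplies the `n`-th term of the theta series by `e(½‖n - ξ₂‖²)`,
and shifting `ξ₁` by `ξ₂ + s` multiplies it by `e(n·ξ₂ + n·s)`. Since
`½‖n - ξ₂‖² + n·ξ₂ = ½‖n‖² + ½‖ξ₂‖²` and `½‖n‖² + n·s = Σᵢ nᵢ(nᵢ + 1)/2 ∈ ℤ`,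
every term picks up the same unimodular factor `e(½‖ξ₂‖²)`.
-/

lemma e_add (a b : ℝ) : e (a + b) = e a * e b := by
  rw [e, e, e, ← Complex.exp_add]
  push_cast
  ring_nf

lemma e_intCast (m : ℤ) : e m = 1 := by
  rw [e, show 2 * Real.pi * Complex.I * ((m : ℝ) : ℂ) = m * (2 * Real.pi * Complex.I) by
    push_cast; ring]
  exact Complex.exp_int_mul_two_pi_mul_I m

lemma norm_e (t : ℝ) : ‖e t‖ = 1 := by
  rw [e, show 2 * Real.pi * Complex.I * (t : ℂ) = ((2 * Real.pi * t : ℝ) : ℂ) * Complex.I by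
    push_cast; ring]
  exact Complex.norm_exp_ofReal_mul_I _

lemma norm_sq_intVec {k : ℕ} (n : Fin k → ℤ) : ‖intVec n‖ ^ 2 = ∑ i, (n i : ℝ) ^ 2 := by
  simp [intVec, EuclideanSpace.norm_sq_eq, sq_abs]

lemma inner_intVec_halfVec {k : ℕ} (n : Fin k → ℤ) :
    ⟪intVec n, halfVec k⟫ = ∑ i, (n i : ℝ) / 2 := by
  simp [intVec, halfVec, PiLp.inner_apply, div_eq_mul_inv, mul_comm]

lemma exists_half_norm_sq_intVec_add_inner_halfVec_eq_intCast {k : ℕ} (n : Fin k → ℤ) :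
    ∃ N : ℤ, 1 / 2 * ‖intVec n‖ ^ 2 + ⟪intVec n, halfVec k⟫ = N := by
  choose r hr using fun i => Int.even_mul_succ_self (n i)
  refine ⟨∑ i, r i, ?_⟩
  rw [norm_sq_intVec, inner_intVec_halfVec, Finset.mul_sum, ← Finset.sum_add_distrib]
  push_cast
  refine Finset.sum_congr rfl fun i _ => ?_
  have hri : ((n i : ℝ) * (n i + 1)) = r i + r i := by exact_mod_cast hr i
  linarith

lemma e_theta_phase_shift {k : ℕ} (n : Fin k → ℤ) (x : ℝ) (ξ₁ ξ₂ : E k) :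
    e (1 / 2 * ‖intVec n - ξ₂‖ ^ 2 * (x + 1) + ⟪intVec n, ξ₁ + ξ₂ + halfVec k⟫) =
      e (1 / 2 * ‖ξ₂‖ ^ 2) * e (1 / 2 * ‖intVec n - ξ₂‖ ^ 2 * x + ⟪intVec n, ξ₁⟫) := by
  obtain ⟨N, hN⟩ := exists_half_norm_sq_intVec_add_inner_halfVec_eq_intCast n
  have hphase : 1 / 2 * ‖intVec n - ξ₂‖ ^ 2 * (x + 1) + ⟪intVec n, ξ₁ + ξ₂ + halfVec k⟫ =
      1 / 2 * ‖ξ₂‖ ^ 2 + (1 / 2 * ‖intVec n - ξ₂‖ ^ 2 * x + ⟪intVec n, ξ₁⟫) + N := by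
    rw [inner_add_right, inner_add_right, ← hN, norm_sub_sq_real]
    ring
  rw [hphase, e_add, e_intCast, mul_one, e_add]

lemma Theta_add_one_shift {k : ℕ} (f : E k → ℂ) (z : ℂ) (φ : ℝ) (ξ₁ ξ₂ : E k) :
    Theta f (z + 1) φ (ξ₁ + ξ₂ + halfVec k, ξ₂) =
      e (1 / 2 * ‖ξ₂‖ ^ 2) * Theta f z φ (ξ₁, ξ₂) := by
  simp only [Theta, Complex.add_im, Complex.one_im, add_zero, Complex.add_re, Complex.one_re,
    e_theta_phase_shift, ← tsum_mul_left]
  congr 1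
  ext n
  ring

theorem theta_invariance_rho2_general {k : ℕ}
    (f : E k → ℂ)
    (z : ℂ) (φ : ℝ) (ξ₁ ξ₂ : E k) :
    ‖Theta f (z + 1) φ (ξ₁ + ξ₂ + halfVec k, ξ₂)‖ =
      ‖Theta f z φ (ξ₁, ξ₂)‖ := by
  rw [Theta_add_one_shift, norm_mul, norm_e, one_mul]

/-- `|Θ_f|` is invariant under `ρ₂ = (n₁; (s, 0))` with `s = (½,…,½)`:
`|Θ_f(z + 1, φ; (ξ₁ + ξ₂ + s, ξ₂))| = |Θ_f(z, φ; (ξ₁, ξ₂))|`. -/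
theorem theta_invariance_rho2 {k : ℕ} (hk : 0 < k)
    (f : E k → ℂ) (hf : Measurable f)
    (η : ℝ) (hη : (k : ℝ) < η) (hκ : kappa η f < ⊤)
    (z : ℂ) (hz : 0 < z.im) (φ : ℝ) (ξ₁ ξ₂ : E k) :
    ‖Theta f (z + 1) φ (ξ₁ + ξ₂ + halfVec k, ξ₂)‖ =
      ‖Theta f z φ (ξ₁, ξ₂)‖ :=
  theta_invariance_rho2_general f z φ ξ₁ ξ₂
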